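/- arXiv:2112.04571 — 5 statements merged into one kernel-verified Lean document; each statement's English description precedes it below -/
import Mathlib

section
/- Let λ^e be an observed-history evaluation policy and λ^b an observed-history behavior policy (so λ^b satisfies sequential ignorability) that almost surely overlap, i.e., for every t, observed history h, and action a, λ^e_t(a|h) > 0 implies λ^b_t(a|h) > 0. Then the sequential importance sampling identity holds: E_{P^{λ^e}}[Γ_T] = E_{P^{λ^b}}[ Γ_T · Π_{t=1}^T w_t ], where Γ_T(ω) = Σ_{t=1}^T β^{t-1} g(s_t, a_t) is the total discounted gain and w_t(ω) = λ^e_t(a_t | H^o_t(ω)) / λ^b_t(a_t | H^o_t(ω)). -/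
open scoped ENNReal

/-- A trajectory `ω = (s_1, o_1, a_1, …, s_T, o_T, a_T)`. -/
abbrev Traj (S O A : Type*) (T : ℕ) := Fin T → S × O × A

variable {S O A : Type*} {T : ℕ}

/-- Latent state at time `t`. -/
def trS (ω : Traj S O A T) (t : Fin T) : S := (ω t).1

/-- Observation at time `t`. -/
def trO (ω : Traj S O A T) (t : Fin T) : O := (ω t).2.1

/-- Action at time `t`. -/
def trA (ω : Traj S O A T) (t : Fin T) : A := (ω t).2.2

/-- An observed history `(o_1, a_1, …, a_{t-1}, o_t)`: past (observation, action)
pairs together with the current observation. -/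
abbrev ObsHist (O A : Type*) := List (O × A) × O

/-- Observed history of a trajectory at time `t`. -/
def obsHist (ω : Traj S O A T) (t : Fin T) : ObsHist O A :=
  (List.ofFn (fun i : Fin t.val =>
      (trO ω ⟨i.val, i.isLt.trans t.isLt⟩, trA ω ⟨i.val, i.isLt.trans t.isLt⟩)), trO ω t)

/-- An observed-history policy `λ = (λ_t)_t`. -/
abbrev ObsPolicy (O A : Type*) (T : ℕ) := Fin T → ObsHist O A → PMF A

/-- Probability mass of a trajectory under sequential composition, with the action
probability factors given abstractly by `actProb`. -/
noncomputable def trajMass (hT : 0 < T) (ρ : PMF S) (q0 : S → PMF O)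
    (p : S → A → PMF S) (q : S → A → PMF O)
    (actProb : Fin T → Traj S O A T → ℝ≥0∞) (ω : Traj S O A T) : ℝ≥0∞ :=
  ρ (trS ω ⟨0, hT⟩) * q0 (trS ω ⟨0, hT⟩) (trO ω ⟨0, hT⟩)
    * ∏ t : Fin T, actProb t ω
    * ∏ t : Fin T, (if h : t.val + 1 < T then
        p (trS ω t) (trA ω t) (trS ω ⟨t.val + 1, h⟩)
          * q (trS ω ⟨t.val + 1, h⟩) (trA ω t) (trO ω ⟨t.val + 1, h⟩)
      else 1)

/-- Probability mass of a trajectory `ω` under an observed-history policy: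
`P^λ(ω)`. -/
noncomputable def obsPolicyMass (hT : 0 < T) (ρ : PMF S) (q0 : S → PMF O)
    (p : S → A → PMF S) (q : S → A → PMF O)
    (lam : ObsPolicy O A T) (ω : Traj S O A T) : ℝ≥0∞ :=
  trajMass hT ρ q0 p q (fun t ω' => lam t (obsHist ω' t) (trA ω' t)) ω

/-- Total discounted gain `Γ_T(ω) = Σ_t β^{t-1} g(s_t, a_t)`. -/
def discGain (β : ℝ) (g : S → A → ℝ) (ω : Traj S O A T) : ℝ :=
  ∑ t : Fin T, β ^ (t : ℕ) * g (trS ω t) (trA ω t)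

/-- Sequential importance sampling identity
`E_{P^{λ^e}}[Γ_T] = E_{P^{λ^b}}[Γ_T · Π_t w_t]` for almost surely overlapping
observed-history evaluation and behavior policies. -/
theorem sequential_importance_sampling
    {S O A : Type*} [Fintype S] [Fintype O] [Fintype A]
    [Nonempty S] [Nonempty O] [Nonempty A] {T : ℕ} (hT : 0 < T)
    (ρ : PMF S) (q0 : S → PMF O) (p : S → A → PMF S) (q : S → A → PMF O)
    (lamE lamB : ObsPolicy O A T)
    (g : S → A → ℝ) (β : ℝ) (hβ0 : 0 ≤ β) (hβ1 : β < 1)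
    (hoverlap : ∀ (t : Fin T) (h : ObsHist O A) (a : A),
      0 < ((lamE t h) a).toReal → 0 < ((lamB t h) a).toReal) :
    ∑ ω : Traj S O A T, (obsPolicyMass hT ρ q0 p q lamE ω).toReal * discGain β g ω
      = ∑ ω : Traj S O A T, (obsPolicyMass hT ρ q0 p q lamB ω).toReal *
          (discGain β g ω * ∏ t : Fin T,
            ((lamE t (obsHist ω t)) (trA ω t)).toReal /
              ((lamB t (obsHist ω t)) (trA ω t)).toReal) := by
  apply Finset.sum_congr rfl
  intro ω _
  set e : Fin T → ℝ := fun t => ((lamE t (obsHist ω t)) (trA ω t)).toReal with he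
  set b : Fin T → ℝ := fun t => ((lamB t (obsHist ω t)) (trA ω t)).toReal with hb
  have hprod : ∏ t : Fin T, e t = (∏ t : Fin T, b t) * ∏ t : Fin T, e t / b t := by
    by_cases hbz : ∀ t : Fin T, b t ≠ 0
    · rw [← Finset.prod_mul_distrib]
      refine Finset.prod_congr rfl fun t _ => ?_
      field_simp [hbz t]
    · push_neg at hbz
      obtain ⟨t, ht⟩ := hbz
      have het : e t = 0 := by
        by_contra hne
        have : 0 < e t := lt_of_le_of_ne ENNReal.toReal_nonneg (Ne.symm hne)
        have := hoverlap t (obsHist ω t) (trA ω t) this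
        exact absurd ht (ne_of_gt this)
      rw [Finset.prod_eq_zero (Finset.mem_univ t) het,
        Finset.prod_eq_zero (Finset.mem_univ t) ht, zero_mul]
  have key : (obsPolicyMass hT ρ q0 p q lamE ω).toReal
      = (obsPolicyMass hT ρ q0 p q lamB ω).toReal * ∏ t : Fin T, e t / b t := by
    simp only [obsPolicyMass, trajMass, ENNReal.toReal_mul, ENNReal.toReal_prod,
      Finset.prod_mul_distrib, Finset.prod_const]
    rw [show (∏ t : Fin T, ((lamE t (obsHist ω t)) (trA ω t)).toReal) = ∏ t : Fin T, e t from rfl,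
      show (∏ t : Fin T, ((lamB t (obsHist ω t)) (trA ω t)).toReal) = ∏ t : Fin T, b t from rfl,
      hprod]
    ring
  rw [key]; ring
end

section
/- (Generalized Sequential Importance Sampling, Proposition 1.) Let M be a finite nonempty index set of models, each model m consisting of an initial latent-state distribution ρ^m, initial observation kernel q₀^m, transition kernel p^m, and observation kernel q^m on common finite types S, O, A with horizon T. Let λ^e be an observed-history evaluation policy and λ^b an observed-history behavior policy (hence both satisfy sequential ignorability under every model) that almost surely overlap (λ^e_t(a|h) > 0 implies λ^b_t(a|h) > 0 for all t, h, a). Then for every pessimism level α ∈ [0,1], MEU_α applied to the model-indexed family (E_{P^{λ^e,m}}[Γ_T])_{m∈M} equals MEU_α applied to the family (E_{P^{λ^b,m}}[Γ_T · Π_{t=1}^T w_t])_{m∈M}; that is, Γ_T(λ^b)·Π_t w_t is an MEU_α-unbiased estimator of Γ_T(λ^e). -/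
open scoped ENNReal

variable {S O A : Type*} {T : ℕ}

/-- The α-maximin expected utility over a finite nonempty set of models:
`MEU_α[x] = α·min_m x(m) + (1−α)·max_m x(m)`. -/
noncomputable def MEU {M : Type*} [Fintype M] [Nonempty M] (α : ℝ) (x : M → ℝ) : ℝ :=
  α * Finset.univ.inf' Finset.univ_nonempty x +
    (1 - α) * Finset.univ.sup' Finset.univ_nonempty x

/-- Generalized Sequential Importance Sampling, Proposition 1:
for every pessimism level `α ∈ [0,1]`,
`MEU_α[(E_{P^{λ^e,m}}[Γ_T])_m] = MEU_α[(E_{P^{λ^b,m}}[Γ_T · Π_t w_t])_m]`. -/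
theorem generalized_sequential_importance_sampling
    {S O A M : Type*} [Fintype S] [Fintype O] [Fintype A] [Fintype M]
    [Nonempty S] [Nonempty O] [Nonempty A] [Nonempty M] {T : ℕ} (hT : 0 < T)
    (ρ : M → PMF S) (q0 : M → S → PMF O)
    (p : M → S → A → PMF S) (q : M → S → A → PMF O)
    (lamE lamB : ObsPolicy O A T)
    (g : S → A → ℝ) (β : ℝ) (hβ0 : 0 ≤ β) (hβ1 : β < 1)
    (α : ℝ) (hα : α ∈ Set.Icc (0 : ℝ) 1)
    (hoverlap : ∀ (t : Fin T) (h : ObsHist O A) (a : A),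
      0 < ((lamE t h) a).toReal → 0 < ((lamB t h) a).toReal) :
    MEU α (fun m => ∑ ω : Traj S O A T,
        (obsPolicyMass hT (ρ m) (q0 m) (p m) (q m) lamE ω).toReal * discGain β g ω)
      = MEU α (fun m => ∑ ω : Traj S O A T,
          (obsPolicyMass hT (ρ m) (q0 m) (p m) (q m) lamB ω).toReal *
            (discGain β g ω * ∏ t : Fin T,
              ((lamE t (obsHist ω t)) (trA ω t)).toReal /
                ((lamB t (obsHist ω t)) (trA ω t)).toReal)) := by
  have hfuneq : (fun m => ∑ ω : Traj S O A T,
        (obsPolicyMass hT (ρ m) (q0 m) (p m) (q m) lamE ω).toReal * discGain β g ω)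
      = (fun m => ∑ ω : Traj S O A T,
          (obsPolicyMass hT (ρ m) (q0 m) (p m) (q m) lamB ω).toReal *
            (discGain β g ω * ∏ t : Fin T,
              ((lamE t (obsHist ω t)) (trA ω t)).toReal /
                ((lamB t (obsHist ω t)) (trA ω t)).toReal)) := by
    funext m
    refine Finset.sum_congr rfl fun ω _ => ?_
    have key : (obsPolicyMass hT (ρ m) (q0 m) (p m) (q m) lamE ω).toReal
        = (obsPolicyMass hT (ρ m) (q0 m) (p m) (q m) lamB ω).toReal
          * ∏ t : Fin T, ((lamE t (obsHist ω t)) (trA ω t)).toReal /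
              ((lamB t (obsHist ω t)) (trA ω t)).toReal := by
      have hE : (∏ t : Fin T, ((lamE t (obsHist ω t)) (trA ω t)).toReal)
          = (∏ t : Fin T, ((lamB t (obsHist ω t)) (trA ω t)).toReal)
            * ∏ t : Fin T, ((lamE t (obsHist ω t)) (trA ω t)).toReal /
                ((lamB t (obsHist ω t)) (trA ω t)).toReal := by
        rw [← Finset.prod_mul_distrib]
        refine Finset.prod_congr rfl fun t _ => ?_
        by_cases hb : ((lamB t (obsHist ω t)) (trA ω t)).toReal = 0
        · have he : ((lamE t (obsHist ω t)) (trA ω t)).toReal = 0 := by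
            by_contra h
            have := hoverlap t (obsHist ω t) (trA ω t)
              (lt_of_le_of_ne ENNReal.toReal_nonneg (Ne.symm h))
            rw [hb] at this
            exact lt_irrefl 0 this
          simp [hb, he]
        · field_simp
      simp only [obsPolicyMass, trajMass, ENNReal.toReal_mul, ENNReal.toReal_prod,
        Finset.prod_mul_distrib]
      rw [hE]; ring
    rw [key]; ring
  rw [hfuneq]
end

section
/- (Bounded unobserved confounding implies bounded marginalized propensity ratios.) Let A and S be finite nonempty types, let f : A × S → ℝ satisfy f(a,s) > 0 for all a, s and Σ_{a∈A} f(a,s) = 1 for every s (f(·,s) is the treatment propensity given latent information s), and let η ≥ 1 satisfy the likelihood-ratio band condition f(a,s)·f(a',s') ≤ η · f(a',s)·f(a,s') for all a, a' ∈ A and s, s' ∈ S. Then for every weight function w : S → ℝ with w(s) ≥ 0 and Σ_{s∈S} w(s) = 1, and for every a ∈ A and s ∈ S: η^{-1} · Σ_{s'} w(s') f(a,s') ≤ f(a,s) ≤ η · Σ_{s'} w(s') f(a,s'); that is, the propensity given the unobserved variable is within a factor η of the marginalized propensity. -/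
/-- bounded unobserved confounding implies bounded marginalized
propensity ratios: under the likelihood-ratio band condition
`f(a,s)·f(a',s') ≤ η·f(a',s)·f(a,s')`, for every weight function `w` the propensity
given the unobserved variable is within a factor `η` of the marginalized propensity:
`η⁻¹·Σ_{s'} w(s') f(a,s') ≤ f(a,s) ≤ η·Σ_{s'} w(s') f(a,s')`. -/
theorem buc_implies_bounded_marginalized_propensity
    {A S : Type*} [Fintype A] [Fintype S] [Nonempty A] [Nonempty S]
    (f : A → S → ℝ) (hfpos : ∀ a s, 0 < f a s) (hfsum : ∀ s, ∑ a : A, f a s = 1)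
    (η : ℝ) (hη : 1 ≤ η)
    (hband : ∀ (a a' : A) (s s' : S), f a s * f a' s' ≤ η * (f a' s * f a s'))
    (w : S → ℝ) (hw0 : ∀ s, 0 ≤ w s) (hw1 : ∑ s : S, w s = 1) (a : A) (s : S) :
    η⁻¹ * (∑ s' : S, w s' * f a s') ≤ f a s ∧
      f a s ≤ η * ∑ s' : S, w s' * f a s' := by
  have hηpos : 0 < η := lt_of_lt_of_le one_pos hη
  -- pointwise bound: f a s ≤ η * f a s' for all s s'
  have key : ∀ s s' : S, f a s ≤ η * f a s' := by
    intro s s'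
    have h1 : f a s * (∑ a' : A, f a' s') = ∑ a' : A, f a s * f a' s' := by
      rw [Finset.mul_sum]
    have h2 : (∑ a' : A, η * (f a' s * f a s')) = η * f a s' * ∑ a' : A, f a' s := by
      rw [Finset.mul_sum]
      refine Finset.sum_congr rfl fun a' _ => by ring
    calc f a s = f a s * (∑ a' : A, f a' s') := by rw [hfsum s']; ring
      _ = ∑ a' : A, f a s * f a' s' := h1
      _ ≤ ∑ a' : A, η * (f a' s * f a s') :=
          Finset.sum_le_sum fun a' _ => hband a a' s s'
      _ = η * f a s' * ∑ a' : A, f a' s := h2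
      _ = η * f a s' := by rw [hfsum s]; ring
  constructor
  · rw [inv_mul_le_iff₀ hηpos]
    calc ∑ s' : S, w s' * f a s' ≤ ∑ s' : S, w s' * (η * f a s) :=
          Finset.sum_le_sum fun s' _ =>
            mul_le_mul_of_nonneg_left (key s' s) (hw0 s')
      _ = η * f a s := by
          rw [← Finset.sum_mul]; · rw [hw1]; ring
  · calc f a s = ∑ s' : S, w s' * f a s := by
          rw [← Finset.sum_mul, hw1, one_mul]
      _ ≤ ∑ s' : S, w s' * (η * f a s') :=
          Finset.sum_le_sum fun s' _ =>
            mul_le_mul_of_nonneg_left (key s s') (hw0 s')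
      _ = η * ∑ s' : S, w s' * f a s' := by
          rw [Finset.mul_sum]; exact Finset.sum_congr rfl fun s' _ => by ring
end

section
/- (Sign-splitting bound for products of banded factors.) Let Ω be a finite type, P ∈ PMF Ω, X : Ω → ℝ, W : Ω → ℝ with W(ω) ≥ 0 for all ω, T ≥ 1, and for each t ∈ {1,…,T} let η_t ≥ 1 and R_t : Ω → ℝ with η_t^{-1} ≤ R_t(ω) ≤ η_t for all ω. Define r̲_t(ω) = η_t^{-1}·1{X(ω)>0} + η_t·1{X(ω)<0} and r̄_t(ω) = η_t^{-1}·1{X(ω)<0} + η_t·1{X(ω)>0}. Then E_P[ X·W·Π_{t=1}^T r̲_t ] ≤ E_P[ X·W·Π_{t=1}^T R_t ] ≤ E_P[ X·W·Π_{t=1}^T r̄_t ], where E_P denotes the expectation (finite weighted sum) with respect to P and 1{·} denotes an indicator function. -/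
private lemma band_prod {T : ℕ} (η : Fin T → ℝ) (hη : ∀ t, 1 ≤ η t)
    (r : Fin T → ℝ) (hr : ∀ t, (η t)⁻¹ ≤ r t ∧ r t ≤ η t) :
    (∏ t : Fin T, (η t)⁻¹) ≤ (∏ t : Fin T, r t) ∧
    (∏ t : Fin T, r t) ≤ ∏ t : Fin T, η t := by
  constructor
  · exact Finset.prod_le_prod (fun t _ => inv_nonneg.2 (le_trans zero_le_one (hη t)))
      (fun t _ => (hr t).1)
  · exact Finset.prod_le_prod (fun t _ => le_trans (inv_nonneg.2 (le_trans zero_le_one (hη t))) (hr t).1)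
      (fun t _ => (hr t).2)

/-- sign-splitting bound for products of banded factors: if each
`R_t` lies in the band `[η_t⁻¹, η_t]` with `η_t ≥ 1` and `W ≥ 0`, then
`E_P[X·W·Π_t r̲_t] ≤ E_P[X·W·Π_t R_t] ≤ E_P[X·W·Π_t r̄_t]`, where
`r̲_t = η_t⁻¹·1{X>0} + η_t·1{X<0}` and `r̄_t = η_t⁻¹·1{X<0} + η_t·1{X>0}`. -/
theorem sign_splitting_bound {Ω : Type*} [Fintype Ω] (P : PMF Ω)
    (X W : Ω → ℝ) (hW : ∀ ω, 0 ≤ W ω)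
    {T : ℕ} (hT : 1 ≤ T) (η : Fin T → ℝ) (hη : ∀ t, 1 ≤ η t)
    (R : Fin T → Ω → ℝ) (hR : ∀ t ω, (η t)⁻¹ ≤ R t ω ∧ R t ω ≤ η t) :
    (∑ ω : Ω, (P ω).toReal * (X ω * W ω * ∏ t : Fin T,
        ((η t)⁻¹ * (if 0 < X ω then (1 : ℝ) else 0) +
          η t * (if X ω < 0 then (1 : ℝ) else 0)))
      ≤ ∑ ω : Ω, (P ω).toReal * (X ω * W ω * ∏ t : Fin T, R t ω)) ∧
    (∑ ω : Ω, (P ω).toReal * (X ω * W ω * ∏ t : Fin T, R t ω)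
      ≤ ∑ ω : Ω, (P ω).toReal * (X ω * W ω * ∏ t : Fin T,
          ((η t)⁻¹ * (if X ω < 0 then (1 : ℝ) else 0) +
            η t * (if 0 < X ω then (1 : ℝ) else 0)))) := by
  have key : ∀ ω : Ω,
      (X ω * W ω * ∏ t : Fin T,
        ((η t)⁻¹ * (if 0 < X ω then (1 : ℝ) else 0) +
          η t * (if X ω < 0 then (1 : ℝ) else 0)))
      ≤ X ω * W ω * ∏ t : Fin T, R t ω ∧
      X ω * W ω * ∏ t : Fin T, R t ω ≤
      (X ω * W ω * ∏ t : Fin T,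
          ((η t)⁻¹ * (if X ω < 0 then (1 : ℝ) else 0) +
            η t * (if 0 < X ω then (1 : ℝ) else 0))) := by
    intro ω
    obtain ⟨h1, h2⟩ := band_prod η hη (fun t => R t ω) (fun t => hR t ω)
    rcases lt_trichotomy (X ω) 0 with hx | hx | hx
    · have hx' : ¬ (0 < X ω) := by linarith
      simp only [hx, hx', if_pos, if_neg, not_false_iff, mul_one, mul_zero, add_zero, zero_add]
      have hxw : X ω * W ω ≤ 0 := mul_nonpos_of_nonpos_of_nonneg (le_of_lt hx) (hW ω)
      exact ⟨mul_le_mul_of_nonpos_left h2 hxw, mul_le_mul_of_nonpos_left h1 hxw⟩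
    · simp [hx]
    · have hx' : ¬ (X ω < 0) := by linarith
      simp only [hx, hx', if_pos, if_neg, not_false_iff, mul_one, mul_zero, add_zero, zero_add]
      have hxw : 0 ≤ X ω * W ω := mul_nonneg (le_of_lt hx) (hW ω)
      exact ⟨mul_le_mul_of_nonneg_left h1 hxw, mul_le_mul_of_nonneg_left h2 hxw⟩
  have hp : ∀ ω : Ω, (0 : ℝ) ≤ (P ω).toReal := fun ω => ENNReal.toReal_nonneg
  constructor
  · exact Finset.sum_le_sum fun ω _ => mul_le_mul_of_nonneg_left (key ω).1 (hp ω)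
  · exact Finset.sum_le_sum fun ω _ => mul_le_mul_of_nonneg_left (key ω).2 (hp ω)
end

section
/- (GSIS under Bounded Unobservable Confounding, Proposition 2(i).) In the finite-horizon controlled hidden-state process, let λ^b be a full-history behavior policy and for each t, observed history h with P^{λ^b}(H^o_t = h) > 0, and action a define the marginalized behavior propensity λ̄^b_t(a|h) ≜ P^{λ^b}(A_t = a and H^o_t = h) / P^{λ^b}(H^o_t = h). Assume: (a) (overlap) the observed-history evaluation policy λ^e satisfies: λ^e_t(a|h) > 0 implies λ̄^b_t(a|h) > 0, for every t, every observed history h with positive probability under P^{λ^b}, and every a; (b) (bounded unobserved confounding) there exist constants η_t ≥ 1 such that for every full history h^u with positive probability under P^{λ^b}, with observed part h^o, and every action a with λ̄^b_t(a|h^o) > 0, η_t^{-1} ≤ λ^b_t(a|h^u)/λ̄^b_t(a|h^o) ≤ η_t. Then E_{P^{λ^b}}[ Γ_T · Π_{t=1}^T w̲_t ] ≤ E_{P^{λ^e}}[ Γ_T ] ≤ E_{P^{λ^b}}[ Γ_T · Π_{t=1}^T w̄_t ], where w_t(ω) = λ^e_t(a_t|H^o_t(ω)) / λ̄^b_t(a_t|H^o_t(ω)),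 w̲_t(ω) = w_t(ω)·(η_t^{-1}·1{Γ_T(ω)>0} + η_t·1{Γ_T(ω)<0}), and w̄_t(ω) = w_t(ω)·(η_t^{-1}·1{Γ_T(ω)<0} + η_t·1{Γ_T(ω)>0}). -/
open scoped ENNReal

variable {S O A : Type*} {T : ℕ}

/-- A full history `(s_1, o_1, a_1, …, s_t, o_t)`: past (state, observation, action)
triples together with the current state and observation. -/
abbrev FullHist (S O A : Type*) := List (S × O × A) × (S × O)

/-- Full history of a trajectory at time `t`. -/
def fullHist (ω : Traj S O A T) (t : Fin T) : FullHist S O A :=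
  (List.ofFn (fun i : Fin t.val =>
      (trS ω ⟨i.val, i.isLt.trans t.isLt⟩, trO ω ⟨i.val, i.isLt.trans t.isLt⟩,
        trA ω ⟨i.val, i.isLt.trans t.isLt⟩)),
    (trS ω t, trO ω t))

/-- The observed part of a full history. -/
def obsPart (h : FullHist S O A) : ObsHist O A :=
  (h.1.map fun x => (x.2.1, x.2.2), h.2.2)

/-- A full-history policy. -/
abbrev FullPolicy (S O A : Type*) (T : ℕ) := Fin T → FullHist S O A → PMF A

/-- Probability mass of a trajectory `ω` under a full-history policy. -/
noncomputable def fullPolicyMass (hT : 0 < T) (ρ : PMF S) (q0 : S → PMF O)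
    (p : S → A → PMF S) (q : S → A → PMF O)
    (lam : FullPolicy S O A T) (ω : Traj S O A T) : ℝ≥0∞ :=
  trajMass hT ρ q0 p q (fun t ω' => lam t (fullHist ω' t) (trA ω' t)) ω

variable [Fintype S] [Fintype O] [Fintype A]
variable [DecidableEq S] [DecidableEq O] [DecidableEq A]

/-- `P(H^o_t = h)` for a mass function on trajectories. -/
def probObsHist (mass : Traj S O A T → ℝ) (t : Fin T) (h : ObsHist O A) : ℝ :=
  ∑ ω : Traj S O A T, if obsHist ω t = h then mass ω else 0

/-- `P(A_t = a ∧ H^o_t = h)` for a mass function on trajectories. -/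
def probActObsHist (mass : Traj S O A T → ℝ) (t : Fin T) (a : A) (h : ObsHist O A) : ℝ :=
  ∑ ω : Traj S O A T, if obsHist ω t = h ∧ trA ω t = a then mass ω else 0

/-- The marginalized behavior propensity
`λ̄^b_t(a|h) = P(A_t = a ∧ H^o_t = h) / P(H^o_t = h)` (with `x/0 = 0`). -/
noncomputable def margProp (mass : Traj S O A T → ℝ) (t : Fin T) (a : A)
    (h : ObsHist O A) : ℝ :=
  probActObsHist mass t a h / probObsHist mass t h

/-- `P(H^u_t = h)` for a mass function on trajectories. -/
def probFullHist (mass : Traj S O A T → ℝ) (t : Fin T) (h : FullHist S O A) : ℝ :=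
  ∑ ω : Traj S O A T, if fullHist ω t = h then mass ω else 0

/-!
Both trajectory masses share the initial, transition and observation factors, so the behaviour
mass of `ω` times `∏ₜ λ^e_t / λ̄^b_t` equals its evaluation mass times `∏ₜ λ^b_t / λ̄^b_t`.
If `ω` has positive evaluation mass, then by induction on `t` every full history it visits has
positive behaviour probability: overlap and the lower confounding bound at earlier times force
`λ^b > 0` along `ω`, and such a prefix can be continued with positive probability. Hence every
ratio `rₜ = λ^b_t / λ̄^b_t` lies in `[η_t⁻¹, η_t]`, so `Γ · ∏ₜ rₜ η_t⁻¹ ≤ Γ ≤ Γ · ∏ₜ rₜ η_t` when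
`Γ > 0` and the reverse when `Γ < 0`; the bounds then hold trajectory by trajectory.
-/

section Trajectories

variable {S O A : Type*} {T : ℕ}

lemma fullHist_congr {ω ω' : Traj S O A T} {t : Fin T}
    (hlt : ∀ i : Fin T, i.val < t.val → ω' i = ω i)
    (hS : trS ω' t = trS ω t) (hO : trO ω' t = trO ω t) :
    fullHist ω' t = fullHist ω t := by
  unfold fullHist
  rw [hS, hO]
  congr 1
  exact congrArg List.ofFn (funext fun i => by
    simp only [trS, trO, trA, hlt ⟨i.val, i.isLt.trans t.isLt⟩ i.isLt])

lemma obsPart_fullHist (ω : Traj S O A T) (t : Fin T) :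
    obsPart (fullHist ω t) = obsHist ω t := by
  simp only [obsPart, fullHist, obsHist, List.map_ofFn]
  rfl

variable (hT : 0 < T) (ρ : PMF S) (q0 : S → PMF O) (p : S → A → PMF S) (q : S → A → PMF O)

lemma trajMass_ne_zero_iff (actProb : Fin T → Traj S O A T → ℝ≥0∞) (ω : Traj S O A T) :
    trajMass hT ρ q0 p q actProb ω ≠ 0 ↔
      ρ (trS ω ⟨0, hT⟩) ≠ 0 ∧ q0 (trS ω ⟨0, hT⟩) (trO ω ⟨0, hT⟩) ≠ 0 ∧
      (∀ t, actProb t ω ≠ 0) ∧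
      ∀ (t : Fin T) (h : t.val + 1 < T),
        p (trS ω t) (trA ω t) (trS ω ⟨t.val + 1, h⟩) ≠ 0 ∧
          q (trS ω ⟨t.val + 1, h⟩) (trA ω t) (trO ω ⟨t.val + 1, h⟩) ≠ 0 := by
  have : Nonempty (Fin T) := ⟨⟨0, hT⟩⟩
  simp [trajMass, Finset.prod_ne_zero_iff, forall_and, dite_eq_iff, and_assoc]

lemma trajMass_toReal_mul_prod_comm (actProb actProb' : Fin T → Traj S O A T → ℝ≥0∞)
    (ω : Traj S O A T) (f : Fin T → ℝ) :
    (trajMass hT ρ q0 p q actProb ω).toReal * ∏ t, (actProb' t ω).toReal * f t =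
      (trajMass hT ρ q0 p q actProb' ω).toReal * ∏ t, (actProb t ω).toReal * f t := by
  simp only [trajMass, ENNReal.toReal_mul, ENNReal.toReal_prod, Finset.prod_mul_distrib]
  ring

lemma fullPolicyMass_ne_top (lamB : FullPolicy S O A T) (ω : Traj S O A T) :
    fullPolicyMass hT ρ q0 p q lamB ω ≠ ⊤ := by
  refine ENNReal.mul_ne_top (ENNReal.mul_ne_top (PMF.apply_ne_top _ _) (PMF.apply_ne_top _ _))
    (ENNReal.prod_ne_top fun _ _ => ENNReal.mul_ne_top (PMF.apply_ne_top _ _)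
      (ENNReal.prod_ne_top fun _ _ => ?_))
  split_ifs
  exacts [ENNReal.mul_ne_top (PMF.apply_ne_top _ _) (PMF.apply_ne_top _ _), ENNReal.one_ne_top]

lemma fullPolicyMass_toReal_mul_prod_eq (lamB : FullPolicy S O A T) (lamE : ObsPolicy O A T)
    (ω : Traj S O A T) (x : ℝ) (d c : Fin T → ℝ) :
    (fullPolicyMass hT ρ q0 p q lamB ω).toReal *
        (x * ∏ t, (lamE t (obsHist ω t) (trA ω t)).toReal / d t * c t) =
      (obsPolicyMass hT ρ q0 p q lamE ω).toReal *
        (x * ∏ t, (lamB t (fullHist ω t) (trA ω t)).toReal / d t * c t) := by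
  simp only [div_eq_mul_inv, mul_assoc]
  rw [mul_left_comm, mul_left_comm _ x]
  exact congrArg (x * ·) (trajMass_toReal_mul_prod_comm hT ρ q0 p q
    (fun t ω => lamB t (fullHist ω t) (trA ω t)) (fun t ω => lamE t (obsHist ω t) (trA ω t)) ω _)

end Trajectories

noncomputable def PMF.pick {α : Type*} (μ : PMF α) : α := μ.support_nonempty.some

lemma PMF.pick_ne_zero {α : Type*} (μ : PMF α) : μ μ.pick ≠ 0 :=
  (μ.mem_support_iff _).1 μ.support_nonempty.some_mem

section Rollout

variable {S O A : Type*} {T : ℕ}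
variable (p : S → A → PMF S) (q : S → A → PMF O) (lamB : FullPolicy S O A T)
  (ω : Traj S O A T) (t : Fin T)

/-- Entry `n`, given the earlier entries `l`, of a trajectory that follows `ω` up to `(s_t, o_t)`
and afterwards makes choices of positive probability under `p`, `q` and `lamB`. -/
noncomputable def rolloutStep (n : ℕ) (l : List (S × O × A)) : S × O × A :=
  if hn : n < T then
    let so : S × O :=
      if n ≤ t.val then (trS ω ⟨n, hn⟩, trO ω ⟨n, hn⟩)
      else
        let prev := l.getLastD (ω t)
        let s := (p prev.1 prev.2.2).pick
        (s, (q s prev.2.2).pick)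
    (so.1, so.2, if n < t.val then trA ω ⟨n, hn⟩ else (lamB ⟨n, hn⟩ (l, so)).pick)
  else ω t

noncomputable def rolloutList : ℕ → List (S × O × A)
  | 0 => []
  | n + 1 => rolloutList n ++ [rolloutStep p q lamB ω t n (rolloutList n)]

noncomputable def rollout : Traj S O A T :=
  fun i => rolloutStep p q lamB ω t i (rolloutList p q lamB ω t i)

lemma rolloutList_eq_ofFn {n : ℕ} (hn : n ≤ T) :
    rolloutList p q lamB ω t n =
      List.ofFn fun i : Fin n => rollout p q lamB ω t ⟨i, i.isLt.trans_le hn⟩ := by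
  induction n with
  | zero => rfl
  | succ n ih =>
    rw [rolloutList, List.ofFn_succ', List.concat_eq_append]
    exact congrArg (· ++ _) (ih (by omega))

lemma fullHist_rollout (i : Fin T) :
    fullHist (rollout p q lamB ω t) i =
      (rolloutList p q lamB ω t i,
        (trS (rollout p q lamB ω t) i, trO (rollout p q lamB ω t) i)) := by
  rw [rolloutList_eq_ofFn p q lamB ω t i.isLt.le]
  rfl

lemma rollout_of_lt {i : Fin T} (hi : i.val < t.val) : rollout p q lamB ω t i = ω i := by
  simp [rollout, rolloutStep, hi, hi.le, trS, trO, trA]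

lemma trS_rollout_of_le {i : Fin T} (hi : i.val ≤ t.val) :
    trS (rollout p q lamB ω t) i = trS ω i := by
  simp [rollout, rolloutStep, hi, trS]

lemma trO_rollout_of_le {i : Fin T} (hi : i.val ≤ t.val) :
    trO (rollout p q lamB ω t) i = trO ω i := by
  simp [rollout, rolloutStep, hi, trO]

lemma fullHist_rollout_of_le {i : Fin T} (hi : i.val ≤ t.val) :
    fullHist (rollout p q lamB ω t) i = fullHist ω i :=
  fullHist_congr (fun _ hj => rollout_of_lt p q lamB ω t (hj.trans_le hi))
    (trS_rollout_of_le p q lamB ω t hi) (trO_rollout_of_le p q lamB ω t hi)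

lemma lamB_rollout_ne_zero {i : Fin T} (hi : t.val ≤ i.val) :
    lamB i (fullHist (rollout p q lamB ω t) i) (trA (rollout p q lamB ω t) i) ≠ 0 := by
  rw [fullHist_rollout]
  simp only [rollout, rolloutStep, trS, trO, trA, dif_pos i.isLt, if_neg (Nat.not_lt.2 hi)]
  exact PMF.pick_ne_zero _

lemma rollout_succ {i : Fin T} (h : i.val + 1 < T) (hi : t.val ≤ i.val) :
    trS (rollout p q lamB ω t) ⟨i.val + 1, h⟩ =
        (p (trS (rollout p q lamB ω t) i) (trA (rollout p q lamB ω t) i)).pick ∧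
      trO (rollout p q lamB ω t) ⟨i.val + 1, h⟩ =
        (q (trS (rollout p q lamB ω t) ⟨i.val + 1, h⟩) (trA (rollout p q lamB ω t) i)).pick := by
  simp [rollout, rolloutStep, rolloutList, trS, trO, trA, h, Nat.not_le.2 (Nat.lt_succ_of_le hi)]

end Rollout

section PositiveExtension

variable {S O A : Type*} {T : ℕ} (hT : 0 < T) (ρ : PMF S) (q0 : S → PMF O)
  (p : S → A → PMF S) (q : S → A → PMF O) (lamB : FullPolicy S O A T)

lemma exists_fullPolicyMass_ne_zero_fullHist_eq (ω : Traj S O A T) (t : Fin T)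
    (hρ : ρ (trS ω ⟨0, hT⟩) ≠ 0) (hq0 : q0 (trS ω ⟨0, hT⟩) (trO ω ⟨0, hT⟩) ≠ 0)
    (htr : ∀ (i : Fin T) (h : i.val + 1 < T), i.val < t.val →
      p (trS ω i) (trA ω i) (trS ω ⟨i.val + 1, h⟩) ≠ 0 ∧
        q (trS ω ⟨i.val + 1, h⟩) (trA ω i) (trO ω ⟨i.val + 1, h⟩) ≠ 0)
    (hlamB : ∀ i : Fin T, i.val < t.val → lamB i (fullHist ω i) (trA ω i) ≠ 0) :
    ∃ ω', fullHist ω' t = fullHist ω t ∧ fullPolicyMass hT ρ q0 p q lamB ω' ≠ 0 := by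
  set ω' := rollout p q lamB ω t
  have hS (i : Fin T) (hi : i.val ≤ t.val) : trS ω' i = trS ω i := trS_rollout_of_le p q lamB ω t hi
  have hO (i : Fin T) (hi : i.val ≤ t.val) : trO ω' i = trO ω i := trO_rollout_of_le p q lamB ω t hi
  have hA (i : Fin T) (hi : i.val < t.val) : trA ω' i = trA ω i := by
    simp only [trA, ω', rollout_of_lt p q lamB ω t hi]
  refine ⟨ω', fullHist_rollout_of_le p q lamB ω t le_rfl, ?_⟩
  refine (trajMass_ne_zero_iff hT ρ q0 p q _ ω').2 ⟨?_, ?_, fun i => ?_, fun i h => ?_⟩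
  · rwa [hS _ (Nat.zero_le _)]
  · rwa [hS _ (Nat.zero_le _), hO _ (Nat.zero_le _)]
  · rcases lt_or_ge i.val t.val with hi | hi
    · rw [fullHist_rollout_of_le p q lamB ω t hi.le, hA i hi]
      exact hlamB i hi
    · exact lamB_rollout_ne_zero p q lamB ω t hi
  · rcases lt_or_ge i.val t.val with hi | hi
    · rw [hS i hi.le, hA i hi, hS ⟨i.val + 1, h⟩ hi, hO ⟨i.val + 1, h⟩ hi]
      exact htr i h hi
    · obtain ⟨hs, ho⟩ := rollout_succ p q lamB ω t h hi
      rw [ho, hs]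
      exact ⟨PMF.pick_ne_zero _, PMF.pick_ne_zero _⟩

end PositiveExtension

lemma Finset.sum_ite_pos_of_pos {ι : Type*} [Fintype ι] {P : ι → Prop} [DecidablePred P]
    {m : ι → ℝ} (hm : ∀ j, 0 ≤ m j) {i : ι} (hi : P i) (h : 0 < m i) :
    0 < ∑ j, if P j then m j else 0 :=
  Finset.sum_pos' (fun j _ => by split_ifs <;> simp [hm j]) ⟨i, Finset.mem_univ i, by simpa [hi]⟩

lemma mul_prod_mul_signWeight_le_self {ι : Type*} [Fintype ι] (Γ : ℝ) {η r : ι → ℝ}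
    (hη : ∀ i, 0 < η i) (hr : ∀ i, (η i)⁻¹ ≤ r i ∧ r i ≤ η i) :
    Γ * ∏ i, r i * ((η i)⁻¹ * (if 0 < Γ then 1 else 0) + η i * (if Γ < 0 then 1 else 0)) ≤ Γ := by
  rcases lt_trichotomy Γ 0 with hΓ | rfl | hΓ
  · simp only [hΓ, hΓ.not_gt, if_true, if_false, mul_zero, mul_one, zero_add]
    refine mul_le_of_one_le_right hΓ.le (Finset.one_le_prod fun i _ => ?_)
    exact (inv_le_iff_one_le_mul₀ (hη i)).1 (hr i).1
  · simp
  · simp only [hΓ, hΓ.not_gt, if_true, if_false, mul_zero, mul_one, add_zero]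
    refine mul_le_of_le_one_right hΓ.le (Finset.prod_le_one (fun i _ => ?_) fun i _ => ?_)
    · exact mul_nonneg ((inv_pos.2 (hη i)).le.trans (hr i).1) (inv_pos.2 (hη i)).le
    · exact div_le_one_of_le₀ (hr i).2 (hη i).le

section Confounding

variable {S O A : Type*} [Fintype S] [Fintype O] [Fintype A]
  [DecidableEq S] [DecidableEq O] [DecidableEq A] {T : ℕ}

def ObsOverlap (mass : Traj S O A T → ℝ) (lamE : ObsPolicy O A T) : Prop :=
  ∀ (t : Fin T) (h : ObsHist O A) (a : A),
    0 < probObsHist mass t h → 0 < (lamE t h a).toReal → 0 < margProp mass t a h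

def BoundedConfounding (mass : Traj S O A T → ℝ) (lamB : FullPolicy S O A T) (η : Fin T → ℝ) :
    Prop :=
  ∀ (t : Fin T) (hu : FullHist S O A) (a : A),
    0 < probFullHist mass t hu → 0 < margProp mass t a (obsPart hu) →
      (η t)⁻¹ ≤ (lamB t hu a).toReal / margProp mass t a (obsPart hu) ∧
        (lamB t hu a).toReal / margProp mass t a (obsPart hu) ≤ η t

variable (hT : 0 < T) (ρ : PMF S) (q0 : S → PMF O) (p : S → A → PMF S) (q : S → A → PMF O)
  (lamB : FullPolicy S O A T) (lamE : ObsPolicy O A T)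

lemma propensity_ratio_mem_Icc {η : Fin T → ℝ} (hη : ∀ t, 0 < η t)
    (hov : ObsOverlap (fun ω => (fullPolicyMass hT ρ q0 p q lamB ω).toReal) lamE)
    (hbc : BoundedConfounding (fun ω => (fullPolicyMass hT ρ q0 p q lamB ω).toReal) lamB η)
    {ω : Traj S O A T} (hω : obsPolicyMass hT ρ q0 p q lamE ω ≠ 0) (t : Fin T) :
    (η t)⁻¹ ≤ (lamB t (fullHist ω t) (trA ω t)).toReal /
        margProp (fun ω => (fullPolicyMass hT ρ q0 p q lamB ω).toReal) t (trA ω t)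
          (obsHist ω t) ∧
      (lamB t (fullHist ω t) (trA ω t)).toReal /
        margProp (fun ω => (fullPolicyMass hT ρ q0 p q lamB ω).toReal) t (trA ω t)
          (obsHist ω t) ≤ η t := by
  obtain ⟨hρ, hq0, hlamE, htr⟩ := (trajMass_ne_zero_iff hT ρ q0 p q _ ω).1 hω
  induction t using WellFoundedLT.induction with | _ t ih => ?_
  have hlamB (i : Fin T) (hi : i.val < t.val) : lamB i (fullHist ω i) (trA ω i) ≠ 0 := by
    intro h0
    have := (inv_pos.2 (hη i)).trans_le (ih i hi).1
    simp [h0] at this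
  obtain ⟨ω', hω'_hist, hω'⟩ :=
    exists_fullPolicyMass_ne_zero_fullHist_eq hT ρ q0 p q lamB ω t hρ hq0 (fun i h _ => htr i h)
      hlamB
  have hω'_pos : 0 < (fullPolicyMass hT ρ q0 p q lamB ω').toReal :=
    ENNReal.toReal_pos hω' (fullPolicyMass_ne_top hT ρ q0 p q lamB ω')
  have hfull : 0 < probFullHist (fun ω => (fullPolicyMass hT ρ q0 p q lamB ω).toReal) t
      (fullHist ω t) :=
    Finset.sum_ite_pos_of_pos (fun _ => ENNReal.toReal_nonneg) hω'_hist hω'_pos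
  have hobs : 0 < probObsHist (fun ω => (fullPolicyMass hT ρ q0 p q lamB ω).toReal) t
      (obsHist ω t) :=
    Finset.sum_ite_pos_of_pos (fun _ => ENNReal.toReal_nonneg)
      (by rw [← obsPart_fullHist, hω'_hist, obsPart_fullHist]) hω'_pos
  have hmarg := hov t _ _ hobs (ENNReal.toReal_pos (hlamE t) (PMF.apply_ne_top _ _))
  rw [← obsPart_fullHist] at hmarg ⊢
  exact hbc t _ _ hfull hmarg

lemma fullPolicyMass_toReal_mul_prod_signWeight_le {η : Fin T → ℝ} (hη : ∀ t, 0 < η t)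
    (hov : ObsOverlap (fun ω => (fullPolicyMass hT ρ q0 p q lamB ω).toReal) lamE)
    (hbc : BoundedConfounding (fun ω => (fullPolicyMass hT ρ q0 p q lamB ω).toReal) lamB η)
    (x : ℝ) (ω : Traj S O A T) :
    (fullPolicyMass hT ρ q0 p q lamB ω).toReal *
        (x * ∏ t, (lamE t (obsHist ω t) (trA ω t)).toReal /
            margProp (fun ω => (fullPolicyMass hT ρ q0 p q lamB ω).toReal) t (trA ω t)
              (obsHist ω t) *
          ((η t)⁻¹ * (if 0 < x then 1 else 0) + η t * (if x < 0 then 1 else 0))) ≤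
      (obsPolicyMass hT ρ q0 p q lamE ω).toReal * x := by
  rw [fullPolicyMass_toReal_mul_prod_eq]
  by_cases hω : obsPolicyMass hT ρ q0 p q lamE ω = 0
  · simp [hω]
  · exact mul_le_mul_of_nonneg_left (mul_prod_mul_signWeight_le_self x hη
      (propensity_ratio_mem_Icc hT ρ q0 p q lamB lamE hη hov hbc hω)) ENNReal.toReal_nonneg

lemma le_fullPolicyMass_toReal_mul_prod_signWeight {η : Fin T → ℝ} (hη : ∀ t, 0 < η t)
    (hov : ObsOverlap (fun ω => (fullPolicyMass hT ρ q0 p q lamB ω).toReal) lamE)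
    (hbc : BoundedConfounding (fun ω => (fullPolicyMass hT ρ q0 p q lamB ω).toReal) lamB η)
    (x : ℝ) (ω : Traj S O A T) :
    (obsPolicyMass hT ρ q0 p q lamE ω).toReal * x ≤
      (fullPolicyMass hT ρ q0 p q lamB ω).toReal *
        (x * ∏ t, (lamE t (obsHist ω t) (trA ω t)).toReal /
            margProp (fun ω => (fullPolicyMass hT ρ q0 p q lamB ω).toReal) t (trA ω t)
              (obsHist ω t) *
          ((η t)⁻¹ * (if x < 0 then 1 else 0) + η t * (if 0 < x then 1 else 0))) := by
  have h := fullPolicyMass_toReal_mul_prod_signWeight_le hT ρ q0 p q lamB lamE hη hov hbc (-x) ω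
  simp only [neg_pos, neg_lt_zero, neg_mul, mul_neg] at h
  linarith

end Confounding

theorem gsis_bounded_unobservable_confounding_general
    {S O A : Type*} [Fintype S] [Fintype O] [Fintype A]
    [DecidableEq S] [DecidableEq O] [DecidableEq A] {T : ℕ} (hT : 0 < T)
    (ρ : PMF S) (q0 : S → PMF O) (p : S → A → PMF S) (q : S → A → PMF O)
    (lamB : FullPolicy S O A T) (lamE : ObsPolicy O A T)
    (g : S → A → ℝ) (β : ℝ)
    (η : Fin T → ℝ) (hη : ∀ t, 1 ≤ η t)
    (hoverlap : ∀ (t : Fin T) (h : ObsHist O A) (a : A),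
      0 < probObsHist (fun ω => (fullPolicyMass hT ρ q0 p q lamB ω).toReal) t h →
      0 < ((lamE t h) a).toReal →
      0 < margProp (fun ω => (fullPolicyMass hT ρ q0 p q lamB ω).toReal) t a h)
    (hBUC : ∀ (t : Fin T) (hu : FullHist S O A) (a : A),
      0 < probFullHist (fun ω => (fullPolicyMass hT ρ q0 p q lamB ω).toReal) t hu →
      0 < margProp (fun ω => (fullPolicyMass hT ρ q0 p q lamB ω).toReal) t a (obsPart hu) →
      (η t)⁻¹ ≤ ((lamB t hu) a).toReal /
            margProp (fun ω => (fullPolicyMass hT ρ q0 p q lamB ω).toReal) t a (obsPart hu) ∧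
        ((lamB t hu) a).toReal /
            margProp (fun ω => (fullPolicyMass hT ρ q0 p q lamB ω).toReal) t a (obsPart hu)
          ≤ η t) :
    (∑ ω : Traj S O A T, (fullPolicyMass hT ρ q0 p q lamB ω).toReal *
        (discGain β g ω * ∏ t : Fin T,
          (((lamE t (obsHist ω t)) (trA ω t)).toReal /
              margProp (fun ω' => (fullPolicyMass hT ρ q0 p q lamB ω').toReal) t
                (trA ω t) (obsHist ω t)) *
            ((η t)⁻¹ * (if 0 < discGain β g ω then (1 : ℝ) else 0) +
              η t * (if discGain β g ω < 0 then (1 : ℝ) else 0)))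
      ≤ ∑ ω : Traj S O A T,
          (obsPolicyMass hT ρ q0 p q lamE ω).toReal * discGain β g ω) ∧
    (∑ ω : Traj S O A T, (obsPolicyMass hT ρ q0 p q lamE ω).toReal * discGain β g ω
      ≤ ∑ ω : Traj S O A T, (fullPolicyMass hT ρ q0 p q lamB ω).toReal *
          (discGain β g ω * ∏ t : Fin T,
            (((lamE t (obsHist ω t)) (trA ω t)).toReal /
                margProp (fun ω' => (fullPolicyMass hT ρ q0 p q lamB ω').toReal) t
                  (trA ω t) (obsHist ω t)) *
              ((η t)⁻¹ * (if discGain β g ω < 0 then (1 : ℝ) else 0) +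
                η t * (if 0 < discGain β g ω then (1 : ℝ) else 0)))) := by
  have hη_pos (t : Fin T) : 0 < η t := one_pos.trans_le (hη t)
  exact ⟨Finset.sum_le_sum fun ω _ => fullPolicyMass_toReal_mul_prod_signWeight_le hT ρ q0 p q
      lamB lamE hη_pos hoverlap hBUC (discGain β g ω) ω,
    Finset.sum_le_sum fun ω _ => le_fullPolicyMass_toReal_mul_prod_signWeight hT ρ q0 p q
      lamB lamE hη_pos hoverlap hBUC (discGain β g ω) ω⟩

/-- GSIS under Bounded Unobservable Confounding, Proposition 2(i):
under overlap of `λ^e` with the marginalized behavior propensities and bounded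
unobserved confounding with constants `η_t ≥ 1`,
`E_{P^{λ^b}}[Γ_T · Π_t w̲_t] ≤ E_{P^{λ^e}}[Γ_T] ≤ E_{P^{λ^b}}[Γ_T · Π_t w̄_t]`. -/
theorem gsis_bounded_unobservable_confounding
    {S O A : Type*} [Fintype S] [Fintype O] [Fintype A]
    [Nonempty S] [Nonempty O] [Nonempty A]
    [DecidableEq S] [DecidableEq O] [DecidableEq A] {T : ℕ} (hT : 0 < T)
    (ρ : PMF S) (q0 : S → PMF O) (p : S → A → PMF S) (q : S → A → PMF O)
    (lamB : FullPolicy S O A T) (lamE : ObsPolicy O A T)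
    (g : S → A → ℝ) (β : ℝ) (hβ0 : 0 ≤ β) (hβ1 : β < 1)
    (η : Fin T → ℝ) (hη : ∀ t, 1 ≤ η t)
    (hoverlap : ∀ (t : Fin T) (h : ObsHist O A) (a : A),
      0 < probObsHist (fun ω => (fullPolicyMass hT ρ q0 p q lamB ω).toReal) t h →
      0 < ((lamE t h) a).toReal →
      0 < margProp (fun ω => (fullPolicyMass hT ρ q0 p q lamB ω).toReal) t a h)
    (hBUC : ∀ (t : Fin T) (hu : FullHist S O A) (a : A),
      0 < probFullHist (fun ω => (fullPolicyMass hT ρ q0 p q lamB ω).toReal) t hu →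
      0 < margProp (fun ω => (fullPolicyMass hT ρ q0 p q lamB ω).toReal) t a (obsPart hu) →
      (η t)⁻¹ ≤ ((lamB t hu) a).toReal /
            margProp (fun ω => (fullPolicyMass hT ρ q0 p q lamB ω).toReal) t a (obsPart hu) ∧
        ((lamB t hu) a).toReal /
            margProp (fun ω => (fullPolicyMass hT ρ q0 p q lamB ω).toReal) t a (obsPart hu)
          ≤ η t) :
    (∑ ω : Traj S O A T, (fullPolicyMass hT ρ q0 p q lamB ω).toReal *
        (discGain β g ω * ∏ t : Fin T,
          (((lamE t (obsHist ω t)) (trA ω t)).toReal /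
              margProp (fun ω' => (fullPolicyMass hT ρ q0 p q lamB ω').toReal) t
                (trA ω t) (obsHist ω t)) *
            ((η t)⁻¹ * (if 0 < discGain β g ω then (1 : ℝ) else 0) +
              η t * (if discGain β g ω < 0 then (1 : ℝ) else 0)))
      ≤ ∑ ω : Traj S O A T,
          (obsPolicyMass hT ρ q0 p q lamE ω).toReal * discGain β g ω) ∧
    (∑ ω : Traj S O A T, (obsPolicyMass hT ρ q0 p q lamE ω).toReal * discGain β g ω
      ≤ ∑ ω : Traj S O A T, (fullPolicyMass hT ρ q0 p q lamB ω).toReal *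
          (discGain β g ω * ∏ t : Fin T,
            (((lamE t (obsHist ω t)) (trA ω t)).toReal /
                margProp (fun ω' => (fullPolicyMass hT ρ q0 p q lamB ω').toReal) t
                  (trA ω t) (obsHist ω t)) *
              ((η t)⁻¹ * (if discGain β g ω < 0 then (1 : ℝ) else 0) +
                η t * (if 0 < discGain β g ω then (1 : ℝ) else 0)))) :=
  gsis_bounded_unobservable_confounding_general hT ρ q0 p q lamB lamE g β η hη hoverlap hBUC
end
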